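/- arXiv:2604.03138 — 2 statements merged into one kernel-verified Lean document; each statement's English description precedes it below -/
import Mathlib

section
/- First-order expansion of the perturbed critical point: Suppose θ* ∈ S. Then there exist μ* > 0, C > 0, and a continuously differentiable curve μ ↦ θ̂_μ defined on [0, μ*) with θ̂_0 = θ*, such that for every μ ∈ (0, μ*): θ̂_μ ∈ S, ∇Ĵ_μ(θ̂_μ) = 0, and ‖θ̂_μ − θ* − μ·(1/h(θ*))·H⁻¹∇h(θ*)‖ ≤ C·μ². In particular θ̂_μ = θ* + μ·H⁻¹∇h(θ*)/h(θ*) + O(μ²). -/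
open Real Set
open scoped RealInnerProductSpace

/-! Writing `G θ = ∇(log h)(θ) = h(θ)⁻¹ ∇h(θ)`, the critical points of `Ĵ_μ` are the solutions of
`H (θ - θ*) = μ G θ`. At `μ = 0` the derivative of this equation in `θ` is the invertible `H`, so
the implicit function theorem gives a `C¹` branch `θ̂_μ` through `θ*`. On it
`θ̂_μ - θ* - μ H⁻¹ G θ* = μ H⁻¹ (G θ̂_μ - G θ*)`, and `G θ̂_μ - G θ* = O(θ̂_μ - θ*) = O(μ)`
because both `G` and `θ̂` are differentiable, so the error is `O(μ²)`. -/

open Filter Topology Asymptotics InnerProductSpace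
open scoped ContDiff

variable {E : Type*} [NormedAddCommGroup E] [InnerProductSpace ℝ E]

section Gradient

variable [CompleteSpace E] {f g : E → ℝ} {f' g' x : E}

theorem HasGradientAt.sub (hf : HasGradientAt f f' x) (hg : HasGradientAt g g' x) :
    HasGradientAt (fun y => f y - g y) (f' - g') x := by
  rw [hasGradientAt_iff_hasFDerivAt, map_sub]
  exact hf.hasFDerivAt.sub hg.hasFDerivAt

theorem HasGradientAt.const_mul (c : ℝ) (hf : HasGradientAt f f' x) :
    HasGradientAt (fun y => c * f y) (c • f') x := by
  rw [hasGradientAt_iff_hasFDerivAt, map_smulₛₗ, RCLike.conj_to_real]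
  exact hf.hasFDerivAt.const_mul c

theorem HasGradientAt.log (hf : HasGradientAt f f' x) (hx : f x ≠ 0) :
    HasGradientAt (fun y => Real.log (f y)) ((f x)⁻¹ • f') x := by
  rw [hasGradientAt_iff_hasFDerivAt, map_smulₛₗ, RCLike.conj_to_real]
  exact hf.hasFDerivAt.log hx

theorem ContDiff.gradient {n m : ℕ∞ω} (hf : ContDiff ℝ n f) (hmn : m + 1 ≤ n) :
    ContDiff ℝ m (gradient f) :=
  (toDual ℝ E).symm.contDiff.comp (hf.fderiv_right hmn)

theorem hasGradientAt_quadratic {H : E →L[ℝ] E} (hH : (H : E →ₗ[ℝ] E).IsSymmetric)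
    (c : ℝ) (θs θ : E) :
    HasGradientAt (fun θ => c + 1 / 2 * ⟪θ - θs, H (θ - θs)⟫) (H (θ - θs)) θ := by
  have hsub : HasFDerivAt (fun θ : E => θ - θs) (ContinuousLinearMap.id ℝ E) θ :=
    (hasFDerivAt_id θ).sub_const θs
  have hquad := ((hsub.inner ℝ (H.hasFDerivAt.comp θ hsub)).const_mul (1 / 2 : ℝ)).const_add c
  rw [hasGradientAt_iff_hasFDerivAt]
  refine hquad.congr_fderiv (ContinuousLinearMap.ext fun v => ?_)
  have hsym : ⟪H (θ - θs), v⟫ = ⟪θ - θs, H v⟫ := hH (θ - θs) v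
  simp [fderivInnerCLM_apply, -map_sub]
  rw [← hsym, real_inner_comm]
  ring

end Gradient

theorem ContinuousLinearMap.isInvertible_of_inner_map_self_pos [FiniteDimensional ℝ E]
    {H : E →L[ℝ] E} (hpos : ∀ x, x ≠ 0 → 0 < ⟪x, H x⟫) : H.IsInvertible := by
  have hinj : Function.Injective H := by
    refine (injective_iff_map_eq_zero H).mpr fun x hx => ?_
    by_contra hx0
    simpa [hx] using hpos x hx0
  exact ⟨(LinearEquiv.ofInjectiveEndo (H : E →ₗ[ℝ] E) hinj).toContinuousLinearEquiv, rfl⟩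

theorem exists_contDiffAt_curve_map_sub_eq_smul [CompleteSpace E] {H : E →L[ℝ] E}
    (hH : H.IsInvertible) {G : E → E} {θs : E} (hG : ContDiffAt ℝ 1 G θs) :
    ∃ θhat : ℝ → E, ContDiffAt ℝ 1 θhat 0 ∧ θhat 0 = θs ∧
      ∀ᶠ μ in 𝓝 0, H (θhat μ - θs) = μ • G (θhat μ) := by
  set F : ℝ × E → E := fun p => H (p.2 - θs) - p.1 • G p.2
  have hF : ContDiffAt ℝ 1 F ((0 : ℝ), θs) := by
    have := hG.comp ((0 : ℝ), θs) contDiffAt_snd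
    fun_prop
  have hpartial : fderiv ℝ F ((0 : ℝ), θs) ∘L .inr ℝ ℝ E = H := by
    -- on the slice `μ = 0`, `F` is `θ ↦ H (θ - θs)`
    have hslice := ((hF.differentiableAt one_ne_zero).hasFDerivAt).comp θs
      (hasFDerivAt_prodMk_right (0 : ℝ) θs)
    refine hslice.unique ?_
    convert H.hasFDerivAt.comp θs ((hasFDerivAt_id θs).sub_const θs) using 1
    · ext θ; simp [F]
    · ext; simp
  have hinv : (fderiv ℝ F ((0 : ℝ), θs) ∘L .inr ℝ ℝ E).IsInvertible := hpartial ▸ hH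
  refine ⟨hF.implicitFunction one_ne_zero hinv, hF.contDiffAt_implicitFunction _ _,
    hF.implicitFunction_apply_self _ _, ?_⟩
  filter_upwards [hF.eventually_apply_implicitFunction one_ne_zero hinv] with μ hμ
  simpa [F, sub_eq_zero] using hμ

theorem isBigO_sub_sub_smul_symm_sq (e : E ≃L[ℝ] E) {G : E → E} {θs : E}
    (hG : DifferentiableAt ℝ G θs) {θhat : ℝ → E} (hθ : DifferentiableAt ℝ θhat 0)
    (hθ0 : θhat 0 = θs) (heq : ∀ᶠ μ in 𝓝 0, e (θhat μ - θs) = μ • G (θhat μ)) :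
    (fun μ => θhat μ - θs - μ • e.symm (G θs)) =O[𝓝 0] (fun μ => μ ^ 2) := by
  have hθ_lin : (fun μ => θhat μ - θs) =O[𝓝 0] (fun μ => μ) := by
    simpa [hθ0] using hθ.hasDerivAt.isBigO_sub
  have hθ_tendsto : Tendsto θhat (𝓝 0) (𝓝 θs) := hθ0 ▸ hθ.continuousAt.tendsto
  have hG_lin : (fun μ => G (θhat μ) - G θs) =O[𝓝 0] (fun μ => θhat μ - θs) :=
    hG.hasFDerivAt.isBigO_sub.comp_tendsto hθ_tendsto
  have hquad : (fun μ => e.symm (μ • (G (θhat μ) - G θs))) =O[𝓝 0] (fun μ => μ * μ) :=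
    ((e.symm : E →L[ℝ] E).isBigO_comp _ _).trans
      ((isBigO_refl (fun μ : ℝ => μ) _).smul (hG_lin.trans hθ_lin))
  refine hquad.congr' ?_ (by simp [sq])
  filter_upwards [heq] with μ hμ
  rw [smul_sub, map_sub, ← hμ, e.symm_apply_apply, map_smul]

theorem first_order_expansion_of_critical_point_general
    {n : ℕ}
    (Jstar : ℝ) (θs : EuclideanSpace ℝ (Fin n))
    (H : EuclideanSpace ℝ (Fin n) →L[ℝ] EuclideanSpace ℝ (Fin n))
    (Hsymm : ∀ x y : EuclideanSpace ℝ (Fin n), ⟪H x, y⟫ = ⟪x, H y⟫)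
    (Hpos : ∀ x : EuclideanSpace ℝ (Fin n), x ≠ 0 → 0 < ⟪x, H x⟫)
    (J : EuclideanSpace ℝ (Fin n) → ℝ)
    (hJdef : ∀ θ, J θ = Jstar + (1 / 2) * ⟪θ - θs, H (θ - θs)⟫)
    (h : EuclideanSpace ℝ (Fin n) → ℝ) (hh : ContDiff ℝ 2 h)
    (S : Set (EuclideanSpace ℝ (Fin n))) (hSdef : S = {θ | 0 < h θ})
    (Jhat : ℝ → EuclideanSpace ℝ (Fin n) → ℝ)
    (hJhatdef : ∀ μ θ, Jhat μ θ = J θ - μ * Real.log (h θ))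
    (hθsS : θs ∈ S) :
    ∃ μstar > 0, ∃ C > 0, ∃ θhat : ℝ → EuclideanSpace ℝ (Fin n),
      ContDiffOn ℝ 1 θhat (Set.Ico 0 μstar) ∧ θhat 0 = θs ∧
      ∃ w : EuclideanSpace ℝ (Fin n), H w = gradient h θs ∧
        ∀ μ ∈ Set.Ioo 0 μstar,
          θhat μ ∈ S ∧ gradient (Jhat μ) (θhat μ) = 0 ∧
          ‖θhat μ - θs - (μ / h θs) • w‖ ≤ C * μ ^ 2 := by
  subst hSdef
  obtain ⟨e, rfl⟩ := H.isInvertible_of_inner_map_self_pos Hpos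
  set G := fun θ => (h θ)⁻¹ • gradient h θ
  have hG : ContDiffAt ℝ 1 G θs :=
    ((hh.of_le one_le_two).contDiffAt.inv hθsS.ne').smul (hh.gradient le_rfl).contDiffAt
  obtain ⟨θhat, hθ, hθ0, hcrit⟩ :=
    exists_contDiffAt_curve_map_sub_eq_smul ContinuousLinearMap.isInvertible_equiv hG
  obtain ⟨C, hC, hbound⟩ := (isBigO_sub_sub_smul_symm_sq e (hG.differentiableAt one_ne_zero)
    (hθ.differentiableAt one_ne_zero) hθ0 hcrit).exists_pos
  have hθ_tendsto : Tendsto θhat (𝓝 0) (𝓝 θs) := hθ0 ▸ hθ.continuousAt.tendsto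
  have hpos : ∀ᶠ μ in 𝓝 0, 0 < h (θhat μ) :=
    hθ_tendsto.eventually ((hh.continuous.tendsto θs).eventually_const_lt hθsS)
  obtain ⟨ε, hε, hball⟩ := mem_nhdsGE_iff_exists_Ico_subset.mp <| nhdsWithin_le_nhds <|
    (hθ.eventually (by simp)).and (hpos.and (hcrit.and hbound.bound))
  refine ⟨ε, hε, C, hC, θhat, fun μ hμ => (hball hμ).1.contDiffWithinAt, hθ0,
    e.symm (gradient h θs), e.apply_symm_apply _, fun μ hμ => ?_⟩
  obtain ⟨-, hpos, hcrit, hbd⟩ := hball (Ioo_subset_Ico_self hμ)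
  have hJ : HasGradientAt J (e (θhat μ - θs)) (θhat μ) := by
    rw [funext hJdef]
    exact hasGradientAt_quadratic Hsymm Jstar θs _
  have hlog : HasGradientAt (fun θ => Real.log (h θ)) (G (θhat μ)) (θhat μ) :=
    ((hh.differentiable two_ne_zero).differentiableAt.hasGradientAt).log hpos.ne'
  refine ⟨hpos, ?_, ?_⟩
  · rw [funext (hJhatdef μ), (hJ.sub (hlog.const_mul μ)).gradient]
    exact sub_eq_zero.mpr hcrit
  · simpa [G, smul_smul, div_eq_mul_inv, abs_of_pos hμ.1] using hbd

theorem first_order_expansion_of_critical_point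
    {n : ℕ} (hn : 1 ≤ n)
    (Jstar : ℝ) (θs : EuclideanSpace ℝ (Fin n))
    (H : EuclideanSpace ℝ (Fin n) →L[ℝ] EuclideanSpace ℝ (Fin n))
    (Hsymm : ∀ x y : EuclideanSpace ℝ (Fin n), ⟪H x, y⟫ = ⟪x, H y⟫)
    (Hpos : ∀ x : EuclideanSpace ℝ (Fin n), x ≠ 0 → 0 < ⟪x, H x⟫)
    (J : EuclideanSpace ℝ (Fin n) → ℝ)
    (hJdef : ∀ θ, J θ = Jstar + (1 / 2) * ⟪θ - θs, H (θ - θs)⟫)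
    (h : EuclideanSpace ℝ (Fin n) → ℝ) (hh : ContDiff ℝ 2 h)
    (S : Set (EuclideanSpace ℝ (Fin n))) (hSdef : S = {θ | 0 < h θ})
    (hSne : S.Nonempty)
    (Jhat : ℝ → EuclideanSpace ℝ (Fin n) → ℝ)
    (hJhatdef : ∀ μ θ, Jhat μ θ = J θ - μ * Real.log (h θ))
    (hθsS : θs ∈ S) :
    ∃ μstar > 0, ∃ C > 0, ∃ θhat : ℝ → EuclideanSpace ℝ (Fin n),
      ContDiffOn ℝ 1 θhat (Set.Ico 0 μstar) ∧ θhat 0 = θs ∧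
      ∃ w : EuclideanSpace ℝ (Fin n), H w = gradient h θs ∧
        ∀ μ ∈ Set.Ioo 0 μstar,
          θhat μ ∈ S ∧ gradient (Jhat μ) (θhat μ) = 0 ∧
          ‖θhat μ - θs - (μ / h θs) • w‖ ≤ C * μ ^ 2 :=
  first_order_expansion_of_critical_point_general Jstar θs H Hsymm Hpos J hJdef h hh S hSdef Jhat
    hJhatdef hθsS
end

section
/- Repulsion of the averaged system in the boundary band: Fix k > 0 and μ > 0. Let m := min{‖∇h(θ)‖ : θ ∈ ∂S}, let c₀ > 0 be such that ‖∇h(θ)‖ ≥ m/2 for all θ in the closure of S with h(θ) ≤ c₀, let M_h := max{‖∇h(θ)‖ : θ ∈ cl(S), h(θ) ≤ c₀} and M_J := max{‖H(θ − θ*)‖ : θ ∈ cl(S), h(θ) ≤ c₀} (assumed positive), and set c₁ := min(c₀, μ·m²/(8·M_J·M_h)). Define the averaged gradient estimate ḡ(θ, a) := (1/T)·∫₀ᵀ m(τ, a)·Ĵ_μ(θ + a·s(τ)) dτ. Then there exists a₁* > 0 such that for every a ∈ (0, a₁*) and every θ ∈ S with c₁/4 ≤ h(θ) ≤ c₁ (with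 θ + a·s(τ) ∈ S for all τ), one has ⟨∇h(θ), −k·ḡ(θ, a)⟩ ≥ k·μ·m²/(16·h(θ)). -/
open Real Set
open scoped RealInnerProductSpace

/-!
Since the frequencies are distinct and `T` is a common period, the demodulation signal has mean
zero and `∫₀ᵀ ⟪G, s τ⟫ • m(τ, a) dτ = (T / a) • G`. A second-order Taylor expansion of `Ĵ_μ`
around `θ` therefore gives `ḡ(θ, a) = ∇Ĵ_μ(θ) + O(a)`, uniformly on the compact band
`{c₁/4 ≤ h ≤ c₁} ⊆ S`. There `∇Ĵ_μ(θ) = H (θ - θ*) - (μ / h θ) ∇h(θ)`, so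
`⟪∇h, -∇Ĵ_μ⟫ ≥ μ m² / (4 h) - M_h M_J ≥ μ m² / (8 h)` by the choice of `c₁`, and for small `a`
the averaging error costs at most another `μ m² / (16 h)`.
-/

lemma integral_cos_mul_eq_zero_of_period {c T : ℝ} (z : ℤ) (hc : c ≠ 0)
    (hz : c * T = 2 * π * z) : ∫ τ in (0:ℝ)..T, cos (c * τ) = 0 := by
  rw [intervalIntegral.integral_comp_mul_left (fun x => cos x) hc, mul_zero, integral_cos,
    sin_zero, hz, show 2 * π * z = (2 * z : ℤ) * π by push_cast; ring, sin_int_mul_pi]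
  simp

lemma integral_sin_mul_eq_zero_of_period {c T : ℝ} (z : ℤ) (hc : c ≠ 0)
    (hz : c * T = 2 * π * z) : ∫ τ in (0:ℝ)..T, sin (c * τ) = 0 := by
  rw [intervalIntegral.integral_comp_mul_left (fun x => sin x) hc, mul_zero, integral_sin,
    cos_zero, hz, show 2 * π * z = (z : ℝ) * (2 * π) by ring, cos_int_mul_two_pi]
  simp

lemma integral_sin_mul_mul_sin_mul_of_period {c₁ c₂ T : ℝ} (z₁ z₂ : ℤ) (hc : c₁ + c₂ ≠ 0)
    (hz₁ : c₁ * T = 2 * π * z₁) (hz₂ : c₂ * T = 2 * π * z₂) :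
    ∫ τ in (0:ℝ)..T, sin (c₁ * τ) * sin (c₂ * τ) = if c₁ = c₂ then T / 2 else 0 := by
  have hprod (τ : ℝ) : sin (c₁ * τ) * sin (c₂ * τ)
      = cos ((c₁ - c₂) * τ) / 2 - cos ((c₁ + c₂) * τ) / 2 := by
    rw [sub_mul, add_mul, cos_sub, cos_add]; ring
  have hcont (c : ℝ) : Continuous fun τ => cos (c * τ) / 2 := by fun_prop
  simp_rw [hprod]
  rw [intervalIntegral.integral_sub ((hcont _).intervalIntegrable _ _)
      ((hcont _).intervalIntegrable _ _), intervalIntegral.integral_div,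
    intervalIntegral.integral_div,
    integral_cos_mul_eq_zero_of_period (z₁ + z₂) hc (by push_cast; linarith)]
  split_ifs with h
  · simp [h]
  · rw [integral_cos_mul_eq_zero_of_period (z₁ - z₂) (sub_ne_zero.2 h) (by push_cast; linarith)]
    simp

lemma EuclideanSpace.intervalIntegral_apply {ι : Type*} [Fintype ι] {F : ℝ → EuclideanSpace ℝ ι}
    {a b : ℝ} (hF : IntervalIntegrable F MeasureTheory.volume a b) (i : ι) :
    (∫ τ in a..b, F τ) i = ∫ τ in a..b, F τ i :=
  ((EuclideanSpace.proj i).intervalIntegral_comp_comm hF).symm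

section Calculus

variable {E : Type*} [NormedAddCommGroup E] [InnerProductSpace ℝ E] [CompleteSpace E]

lemma IsCompact.exists_abs_sub_sub_inner_gradient_le {f : E → ℝ} {U K : Set E} (hU : IsOpen U)
    (hf : ContDiffOn ℝ 2 f U) (hK : IsCompact K) (hKU : K ⊆ U) :
    ∃ L ≥ 0, ∀ x v, segment ℝ x (x + v) ⊆ K →
      |f (x + v) - f x - ⟪gradient f x, v⟫| ≤ L * ‖v‖ ^ 2 := by
  have hf' : ContDiffOn ℝ 1 (fderiv ℝ f) U := hf.fderiv_of_isOpen hU (by norm_num)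
  obtain ⟨M, hM⟩ := hK.exists_bound_of_continuousOn
    ((hf'.continuousOn_fderiv_of_isOpen hU le_rfl).mono hKU)
  refine ⟨max M 0, le_max_right _ _, fun x v hxv => ?_⟩
  have hnhds {y} (hy : y ∈ segment ℝ x (x + v)) : U ∈ nhds y := hU.mem_nhds (hKU (hxv hy))
  have hclose {y} (hy : y ∈ segment ℝ x (x + v)) : ‖y - x‖ ≤ ‖v‖ := by
    simpa [dist_eq_norm] using (convex_closedBall x ‖v‖).segment_subset
      (Metric.mem_closedBall_self (norm_nonneg v)) (by simp) hy
  have hfderiv {y} (hy : y ∈ segment ℝ x (x + v)) :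
      ‖fderiv ℝ f y - fderiv ℝ f x‖ ≤ max M 0 * ‖v‖ :=
    ((convex_segment _ _).norm_image_sub_le_of_norm_fderiv_le
      (fun z hz => (hf'.differentiableOn one_ne_zero).differentiableAt (hnhds hz))
      (fun z hz => (hM z (hxv hz)).trans (le_max_left _ _)) (left_mem_segment ℝ _ _) hy).trans
      (mul_le_mul_of_nonneg_left (hclose hy) (le_max_right _ _))
  have hmvt := (convex_segment x (x + v)).norm_image_sub_le_of_norm_fderiv_le
    (f := fun y => f y - fderiv ℝ f x y) (C := max M 0 * ‖v‖)
    (fun y hy => ((hf.differentiableOn (by norm_num)).differentiableAt (hnhds hy)).sub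
      (fderiv ℝ f x).differentiableAt)
    (fun y hy => by
      rw [fderiv_fun_sub ((hf.differentiableOn (by norm_num)).differentiableAt (hnhds hy))
        (fderiv ℝ f x).differentiableAt, ContinuousLinearMap.fderiv]
      exact hfderiv hy)
    (left_mem_segment ℝ _ _) (right_mem_segment ℝ _ _)
  rw [inner_gradient_left]
  calc |f (x + v) - f x - fderiv ℝ f x v|
      = ‖f (x + v) - fderiv ℝ f x (x + v) - (f x - fderiv ℝ f x x)‖ := by
        rw [map_add, Real.norm_eq_abs]; ring_nf
    _ ≤ max M 0 * ‖v‖ * ‖x + v - x‖ := hmvt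
    _ = max M 0 * ‖v‖ ^ 2 := by rw [add_sub_cancel_left]; ring

lemma hasGradientAt_const_add_half_inner_sub {H : E →L[ℝ] E}
    (hH : ∀ x y, ⟪H x, y⟫ = ⟪x, H y⟫) (c : ℝ) (x₀ x : E) :
    HasGradientAt (fun y => c + (1 / 2) * ⟪y - x₀, H (y - x₀)⟫) (H (x - x₀)) x := by
  rw [hasGradientAt_iff_hasFDerivAt]
  have hsub := (hasFDerivAt_id (𝕜 := ℝ) x).sub_const x₀
  refine (((hsub.inner ℝ (H.hasFDerivAt.comp x hsub)).const_mul (1 / 2)).const_add c).congr_fderiv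
    ?_
  ext v
  simp only [smul_apply, ContinuousLinearMap.comp_apply, ContinuousLinearMap.prod_apply,
    ContinuousLinearMap.id_apply, fderivInnerCLM_apply, smul_eq_mul,
    InnerProductSpace.toDual_apply_apply, id_eq, Function.comp_apply]
  rw [← hH, real_inner_comm v]
  ring

lemma hasGradientAt_sub_const_mul_log {f h : E → ℝ} {g x : E} (hf : HasGradientAt f g x)
    (hh : DifferentiableAt ℝ h x) (hx : h x ≠ 0) (μ : ℝ) :
    HasGradientAt (fun y => f y - μ * log (h y)) (g - (μ / h x) • gradient h x) x := by
  rw [hasGradientAt_iff_hasFDerivAt] at hf ⊢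
  refine (hf.sub ((hh.hasFDerivAt.log hx).const_mul μ)).congr_fderiv ?_
  ext v
  simp only [sub_apply, InnerProductSpace.toDual_apply_apply, smul_apply, smul_eq_mul,
    inner_sub_left, real_inner_smul_left, inner_gradient_left]
  ring

end Calculus

lemma contDiffOn_sub_const_mul_log {E : Type*} [NormedAddCommGroup E] [NormedSpace ℝ E]
    {k : WithTop ℕ∞} {f h : E → ℝ} (hf : ContDiff ℝ k f) (hh : ContDiff ℝ k h) (μ : ℝ) :
    ContDiffOn ℝ k (fun θ => f θ - μ * log (h θ)) {θ | h θ ≠ 0} :=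
  hf.contDiffOn.sub (contDiffOn_const.mul (hh.contDiffOn.log fun _ hθ => hθ))

lemma le_inner_neg_smul_of_norm_sub_le {E : Type*} [NormedAddCommGroup E]
    [InnerProductSpace ℝ E] {g v w : E} {ρ m k : ℝ} (hk : 0 ≤ k) (hρ : 0 ≤ ρ) (hm : 0 ≤ m)
    (hg : m / 2 ≤ ‖g‖) (hv : ‖g‖ * ‖v‖ ≤ ρ * m ^ 2 / 8)
    (hw : ‖g‖ * ‖w - (v - ρ • g)‖ ≤ ρ * m ^ 2 / 16) :
    k * (ρ * m ^ 2 / 16) ≤ ⟪g, -k • w⟫ := by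
  have hsplit : ⟪g, w⟫ = ⟪g, v⟫ - ρ * ‖g‖ ^ 2 + ⟪g, w - (v - ρ • g)⟫ := by
    rw [inner_sub_right, inner_sub_right, real_inner_smul_right, real_inner_self_eq_norm_sq]
    ring
  have hgsq : m ^ 2 / 4 ≤ ‖g‖ ^ 2 := by nlinarith
  have hgw : ⟪g, w⟫ ≤ -(ρ * m ^ 2 / 16) := by
    rw [hsplit]
    nlinarith [real_inner_le_norm g v, real_inner_le_norm g (w - (v - ρ • g)),
      mul_le_mul_of_nonneg_left hgsq hρ]
  rw [real_inner_smul_right]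
  nlinarith

section Dither

variable {n : ℕ} {b ω : Fin n → ℝ} {x : ℝ → EuclideanSpace ℝ (Fin n)}

lemma continuous_of_apply_eq_mul_sin (hx : ∀ τ i, x τ i = b i * sin (ω i * τ)) :
    Continuous x :=
  continuous_induced_rng.2 <| continuous_pi fun i =>
    (continuous_const.mul (continuous_sin.comp (continuous_const.mul continuous_id))).congr
      fun τ => (hx τ i).symm

lemma exists_pos_norm_le_of_apply_eq_mul_sin (hx : ∀ τ i, x τ i = b i * sin (ω i * τ)) :
    ∃ R > 0, ∀ τ, ‖x τ‖ ≤ R := by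
  refine ⟨√(∑ i, b i ^ 2) + 1, by positivity, fun τ => ?_⟩
  have hcoord (i : Fin n) : ‖x τ i‖ ^ 2 ≤ b i ^ 2 := by
    rw [hx, norm_mul, mul_pow, Real.norm_eq_abs, Real.norm_eq_abs, sq_abs, sq_abs]
    exact mul_le_of_le_one_right (sq_nonneg _) (sin_sq_le_one _)
  calc ‖x τ‖ = √(∑ i, ‖x τ i‖ ^ 2) := EuclideanSpace.norm_eq _
    _ ≤ √(∑ i, b i ^ 2) := sqrt_le_sqrt (Finset.sum_le_sum fun i _ => hcoord i)
    _ ≤ √(∑ i, b i ^ 2) + 1 := le_add_of_nonneg_right zero_le_one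

variable {r : Fin n → ℝ} {T : ℝ} {sd : ℝ → EuclideanSpace ℝ (Fin n)}
  {md : ℝ → ℝ → EuclideanSpace ℝ (Fin n)}

lemma integral_demod_eq_zero (hω : ∀ i, ω i ≠ 0) (hper : ∀ i, ∃ z : ℤ, ω i * T = 2 * π * z)
    (hmd : ∀ a τ i, md a τ i = 2 / (a * r i) * sin (ω i * τ)) (a : ℝ) :
    ∫ τ in (0:ℝ)..T, md a τ = 0 := by
  ext i
  obtain ⟨z, hz⟩ := hper i
  rw [EuclideanSpace.intervalIntegral_apply
    ((continuous_of_apply_eq_mul_sin (hmd a)).intervalIntegrable _ _)]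
  simp_rw [hmd]
  rw [intervalIntegral.integral_const_mul, integral_sin_mul_eq_zero_of_period z (hω i) hz,
    mul_zero]
  rfl

lemma integral_inner_dither_smul_demod (hr : ∀ i, r i ≠ 0) (hω : ∀ i, 0 < ω i)
    (hinj : Function.Injective ω) (hper : ∀ i, ∃ z : ℤ, ω i * T = 2 * π * z)
    (hsd : ∀ τ i, sd τ i = r i * sin (ω i * τ))
    (hmd : ∀ a τ i, md a τ i = 2 / (a * r i) * sin (ω i * τ)) {a : ℝ} (ha : a ≠ 0)
    (G : EuclideanSpace ℝ (Fin n)) :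
    ∫ τ in (0:ℝ)..T, ⟪G, sd τ⟫ • md a τ = (T / a) • G := by
  ext i
  have hcont : Continuous fun τ => ⟪G, sd τ⟫ • md a τ := by
    have := continuous_of_apply_eq_mul_sin hsd
    have := continuous_of_apply_eq_mul_sin (hmd a)
    fun_prop
  have hexpand (τ : ℝ) : (⟪G, sd τ⟫ • md a τ) i
      = ∑ j, G j * r j * (2 / (a * r i)) * (sin (ω j * τ) * sin (ω i * τ)) := by
    simp only [PiLp.smul_apply, PiLp.inner_apply, hsd, hmd, smul_eq_mul, Finset.sum_mul,
      RCLike.inner_apply, conj_trivial]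
    exact Finset.sum_congr rfl fun j _ => by ring
  rw [EuclideanSpace.intervalIntegral_apply (hcont.intervalIntegrable _ _)]
  simp_rw [hexpand]
  rw [intervalIntegral.integral_finsetSum fun j _ =>
    (by fun_prop : Continuous _).intervalIntegrable _ _]
  have hsum (j : Fin n) :
      ∫ τ in (0:ℝ)..T, G j * r j * (2 / (a * r i)) * (sin (ω j * τ) * sin (ω i * τ))
      = if j = i then (T / a) * G i else 0 := by
    obtain ⟨zj, hzj⟩ := hper j
    obtain ⟨zi, hzi⟩ := hper i
    rw [intervalIntegral.integral_const_mul,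
      integral_sin_mul_mul_sin_mul_of_period zj zi (by linarith [hω i, hω j]) hzj hzi]
    split_ifs with h₁ h₂ h₂
    · subst h₂; field_simp [hr j]
    · exact absurd (hinj h₁) h₂
    · exact absurd (congrArg ω h₂) h₁
    · simp
  simp_rw [hsum]
  simp

lemma norm_smul_integral_smul_demod_sub_le (hr : ∀ i, r i ≠ 0) (hω : ∀ i, 0 < ω i)
    (hinj : Function.Injective ω) (hper : ∀ i, ∃ z : ℤ, ω i * T = 2 * π * z)
    (hsd : ∀ τ i, sd τ i = r i * sin (ω i * τ))
    (hmd : ∀ a τ i, md a τ i = 2 / (a * r i) * sin (ω i * τ)) (hT : 0 < T) {a B : ℝ}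
    (ha : 0 < a) (hB : ∀ τ, ‖a • md a τ‖ ≤ B) {φ : ℝ → ℝ} (hφ : ContinuousOn φ (Icc 0 T))
    {c ε : ℝ} {G : EuclideanSpace ℝ (Fin n)}
    (hφG : ∀ τ ∈ Icc 0 T, |φ τ - (c + a * ⟪G, sd τ⟫)| ≤ ε) :
    ‖(1 / T) • (∫ τ in (0:ℝ)..T, φ τ • md a τ) - G‖ ≤ ε * B / a := by
  have hsdc := continuous_of_apply_eq_mul_sin hsd
  have hmdc := continuous_of_apply_eq_mul_sin (hmd a)
  have hIcc : uIcc 0 T = Icc 0 T := uIcc_of_le hT.le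
  have hlin : ∫ τ in (0:ℝ)..T, (c + a * ⟪G, sd τ⟫) • md a τ = T • G := by
    simp_rw [add_smul, mul_smul]
    rw [intervalIntegral.integral_add
        ((by fun_prop : Continuous fun τ => c • md a τ).intervalIntegrable _ _)
        ((by fun_prop : Continuous fun τ => a • ⟪G, sd τ⟫ • md a τ).intervalIntegrable _ _),
      intervalIntegral.integral_smul, intervalIntegral.integral_smul,
      integral_demod_eq_zero (fun i => (hω i).ne') hper hmd,
      integral_inner_dither_smul_demod hr hω hinj hper hsd hmd ha.ne', smul_smul]
    simp [mul_div_cancel₀ T ha.ne']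
  have hrem : (1 / T) • (∫ τ in (0:ℝ)..T, φ τ • md a τ) - G
      = (1 / T) • ∫ τ in (0:ℝ)..T, (φ τ - (c + a * ⟪G, sd τ⟫)) • md a τ := by
    simp_rw [sub_smul]
    have hφmd : ContinuousOn (fun τ => φ τ • md a τ) (Icc 0 T) := hφ.smul hmdc.continuousOn
    rw [intervalIntegral.integral_sub (hφmd.intervalIntegrable_of_Icc hT.le)
      ((by fun_prop : Continuous fun τ => (c + a * ⟪G, sd τ⟫) • md a τ).intervalIntegrable _ _),
      hlin, smul_sub, smul_smul, one_div_mul_cancel hT.ne', one_smul]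
  have hbound : ∀ τ ∈ uIoc 0 T, ‖(φ τ - (c + a * ⟪G, sd τ⟫)) • md a τ‖ ≤ ε * (B / a) := by
    intro τ hτ
    rw [norm_smul, Real.norm_eq_abs]
    refine mul_le_mul (hφG τ (uIoc_subset_uIcc.trans hIcc.le hτ)) ?_ (norm_nonneg _)
      ((abs_nonneg _).trans (hφG τ (uIoc_subset_uIcc.trans hIcc.le hτ)))
    have := hB τ
    rw [norm_smul, Real.norm_eq_abs, abs_of_pos ha] at this
    rwa [le_div_iff₀ ha, mul_comm]
  rw [hrem, norm_smul, Real.norm_eq_abs, abs_of_pos (one_div_pos.2 hT)]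
  calc 1 / T * ‖∫ τ in (0:ℝ)..T, (φ τ - (c + a * ⟪G, sd τ⟫)) • md a τ‖
      ≤ 1 / T * (ε * (B / a) * |T - 0|) :=
        mul_le_mul_of_nonneg_left (intervalIntegral.norm_integral_le_of_norm_le_const hbound)
          (one_div_pos.2 hT).le
    _ = ε * B / a := by rw [sub_zero, abs_of_pos hT]; field_simp

noncomputable def averagedGradient {E : Type*} [NormedAddCommGroup E] [NormedSpace ℝ E]
    (T : ℝ) (sd : ℝ → E) (md : ℝ → ℝ → E) (f : E → ℝ) (θ : E) (a : ℝ) : E :=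
  (1 / T) • ∫ τ in (0:ℝ)..T, f (θ + a • sd τ) • md a τ

theorem exists_forall_norm_averagedGradient_sub_gradient_le (hr : ∀ i, r i ≠ 0)
    (hω : ∀ i, 0 < ω i) (hinj : Function.Injective ω)
    (hper : ∀ i, ∃ z : ℤ, ω i * T = 2 * π * z) (hsd : ∀ τ i, sd τ i = r i * sin (ω i * τ))
    (hmd : ∀ a τ i, md a τ i = 2 / (a * r i) * sin (ω i * τ)) (hT : 0 < T)
    {f : EuclideanSpace ℝ (Fin n) → ℝ} {U K : Set (EuclideanSpace ℝ (Fin n))} (hU : IsOpen U)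
    (hf : ContDiffOn ℝ 2 f U) (hK : IsCompact K) (hKU : K ⊆ U) {ε : ℝ} (hε : 0 < ε) :
    ∃ a₀ > 0, ∀ a ∈ Ioo 0 a₀, ∀ θ ∈ K,
      ‖averagedGradient T sd md f θ a - gradient f θ‖ ≤ ε := by
  obtain ⟨δ, hδ, hδU⟩ := hK.exists_cthickening_subset_open hU hKU
  obtain ⟨L, hL, hTaylor⟩ :=
    (hK.cthickening (r := δ)).exists_abs_sub_sub_inner_gradient_le hU hf hδU
  obtain ⟨R, hR, hsdR⟩ := exists_pos_norm_le_of_apply_eq_mul_sin hsd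
  obtain ⟨B, hB, hmdB⟩ := exists_pos_norm_le_of_apply_eq_mul_sin (hmd 1)
  refine ⟨min (δ / R) (ε / (L * R ^ 2 * B + 1)), by positivity, fun a ⟨ha, ha₀⟩ θ hθ => ?_⟩
  have haR : a * R ≤ δ := by
    have := ha₀.trans_le (min_le_left _ _)
    rw [lt_div_iff₀ hR] at this
    exact this.le
  have haε : a * (L * R ^ 2 * B) ≤ ε := by
    have := ha₀.trans_le (min_le_right _ _)
    rw [lt_div_iff₀ (by positivity)] at this
    nlinarith
  have hdisp (τ : ℝ) : ‖a • sd τ‖ ≤ a * R := by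
    rw [norm_smul, Real.norm_eq_abs, abs_of_pos ha]
    exact mul_le_mul_of_nonneg_left (hsdR τ) ha.le
  have hseg (τ : ℝ) : segment ℝ θ (θ + a • sd τ) ⊆ Metric.cthickening δ K :=
    ((convex_closedBall θ δ).segment_subset (Metric.mem_closedBall_self hδ.le)
      (by simpa [dist_eq_norm] using (hdisp τ).trans haR)).trans
      (Metric.closedBall_subset_cthickening hθ δ)
  have hdemod (τ : ℝ) : ‖a • md a τ‖ ≤ B := by
    convert hmdB τ using 2
    ext i
    simp only [PiLp.smul_apply, hmd, smul_eq_mul]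
    field_simp
  have hcont : Continuous fun τ => f (θ + a • sd τ) :=
    hf.continuousOn.comp_continuous
      (continuous_const.add ((continuous_of_apply_eq_mul_sin hsd).const_smul a))
      fun τ => hδU (hseg τ (right_mem_segment ℝ _ _))
  refine (norm_smul_integral_smul_demod_sub_le hr hω hinj hper hsd hmd hT ha hdemod
    hcont.continuousOn (c := f θ) (ε := L * (a * R) ^ 2) fun τ _ => ?_).trans ?_
  · calc |f (θ + a • sd τ) - (f θ + a * ⟪gradient f θ, sd τ⟫)|
        = |f (θ + a • sd τ) - f θ - ⟪gradient f θ, a • sd τ⟫| := by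
          rw [real_inner_smul_right, sub_add_eq_sub_sub]
      _ ≤ L * ‖a • sd τ‖ ^ 2 := hTaylor θ _ (hseg τ)
      _ ≤ L * (a * R) ^ 2 := by gcongr; exact hdisp τ
  · calc L * (a * R) ^ 2 * B / a = a * (L * R ^ 2 * B) := by field_simp
      _ ≤ ε := haε

end Dither

theorem averaged_system_repulsion_in_band_general
    {n : ℕ}
    (Jstar : ℝ) (θs : EuclideanSpace ℝ (Fin n))
    (H : EuclideanSpace ℝ (Fin n) →L[ℝ] EuclideanSpace ℝ (Fin n))
    (Hsymm : ∀ x y : EuclideanSpace ℝ (Fin n), ⟪H x, y⟫ = ⟪x, H y⟫)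
    (J : EuclideanSpace ℝ (Fin n) → ℝ)
    (hJdef : ∀ θ, J θ = Jstar + (1 / 2) * ⟪θ - θs, H (θ - θs)⟫)
    (h : EuclideanSpace ℝ (Fin n) → ℝ) (hh : ContDiff ℝ 2 h)
    (S : Set (EuclideanSpace ℝ (Fin n))) (hSdef : S = {θ | 0 < h θ})
    (hgradne : ∀ θ ∈ frontier S, gradient h θ ≠ 0)
    (hsub : ∀ c : ℝ, IsCompact {θ | h θ ≤ c})
    (Jhat : ℝ → EuclideanSpace ℝ (Fin n) → ℝ)
    (hJhatdef : ∀ μ θ, Jhat μ θ = J θ - μ * Real.log (h θ))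
    (r : Fin n → ℝ) (hr : ∀ i, 0 < r i)
    (ω' : Fin n → ℚ) (hω'pos : ∀ i, 0 < ω' i)
    (hω'dist : ∀ i j : Fin n, i ≠ j → ω' i ≠ ω' j)
    (T : ℝ) (hT : 0 < T)
    (hper : ∀ i, ∃ z : ℤ, (ω' i : ℝ) * T = 2 * Real.pi * z)
    (sd : ℝ → EuclideanSpace ℝ (Fin n))
    (hsd : ∀ τ i, sd τ i = r i * Real.sin ((ω' i : ℝ) * τ))
    (md : ℝ → ℝ → EuclideanSpace ℝ (Fin n))
    (hmd : ∀ a τ i, md a τ i = (2 / (a * r i)) * Real.sin ((ω' i : ℝ) * τ))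
    (k μ : ℝ) (hk : 0 < k) (hμ : 0 < μ)
    (m : ℝ) (hm : IsLeast ((fun θ => ‖gradient h θ‖) '' frontier S) m)
    (c₀ : ℝ) (hc₀ : 0 < c₀)
    (hc₀m : ∀ θ ∈ closure S, h θ ≤ c₀ → m / 2 ≤ ‖gradient h θ‖)
    (Mh MJ : ℝ)
    (hMh : IsGreatest ((fun θ => ‖gradient h θ‖) '' {θ ∈ closure S | h θ ≤ c₀}) Mh)
    (hMJ : IsGreatest ((fun θ => ‖H (θ - θs)‖) '' {θ ∈ closure S | h θ ≤ c₀}) MJ)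
    (hMh0 : 0 < Mh) (hMJ0 : 0 < MJ)
    (c₁ : ℝ) (hc₁ : c₁ = min c₀ (μ * m ^ 2 / (8 * MJ * Mh)))
    :
    ∃ a₁ > 0, ∀ a ∈ Set.Ioo 0 a₁, ∀ θ ∈ S,
      c₁ / 4 ≤ h θ → h θ ≤ c₁ → (∀ τ ∈ Set.Icc (0:ℝ) T, θ + a • sd τ ∈ S) →
      k * μ * m ^ 2 / (16 * h θ) ≤
        ⟪gradient h θ,
          -k • ((1 / T) • ∫ τ in (0:ℝ)..T, Jhat μ (θ + a • sd τ) • md a τ)⟫ := by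
  subst hSdef
  have hm0 : 0 < m := by
    obtain ⟨θ, hθ, rfl⟩ := hm.1
    exact norm_pos_iff.2 (hgradne θ hθ)
  have hc₁0 : 0 < c₁ := hc₁ ▸ lt_min hc₀ (by positivity)
  have hband : IsCompact {θ | c₁ / 4 ≤ h θ ∧ h θ ≤ c₁} :=
    (hsub c₁).of_isClosed_subset ((isClosed_le continuous_const hh.continuous).inter
      (isClosed_le hh.continuous continuous_const)) fun θ hθ => hθ.2
  have hJ : J = fun θ => Jstar + (1 / 2) * ⟪θ - θs, H (θ - θs)⟫ := funext hJdef
  have hJhat : Jhat μ = fun θ => J θ - μ * log (h θ) := funext (hJhatdef μ)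
  have hJsmooth : ContDiff ℝ 2 J := hJ ▸ contDiff_const.add (contDiff_const.mul
    ((contDiff_id.sub contDiff_const).inner ℝ (H.contDiff.comp (contDiff_id.sub contDiff_const))))
  obtain ⟨a₁, ha₁, happrox⟩ := exists_forall_norm_averagedGradient_sub_gradient_le
    (ω := fun i => (ω' i : ℝ)) (fun i => (hr i).ne') (fun i => by exact_mod_cast hω'pos i)
    (fun i j hij => by_contra fun hne => hω'dist i j hne (Rat.cast_injective hij)) hper hsd hmd hT
    (isOpen_lt continuous_const hh.continuous)
    (hJhat ▸ (contDiffOn_sub_const_mul_log hJsmooth hh μ).mono fun θ hθ => ne_of_gt hθ) hband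
    (fun θ hθ => (by positivity : 0 < c₁ / 4).trans_le hθ.1)
    (ε := μ * m ^ 2 / (16 * c₁ * Mh)) (by positivity)
  refine ⟨a₁, ha₁, fun a ha θ (hθS : 0 < h θ) hlow hup _ => ?_⟩
  have hθ : θ ∈ {θ ∈ closure {θ | 0 < h θ} | h θ ≤ c₀} :=
    ⟨subset_closure hθS, hup.trans (hc₁ ▸ min_le_left _ _)⟩
  have hgrad : gradient (Jhat μ) θ = H (θ - θs) - (μ / h θ) • gradient h θ :=
    hJhat ▸ (hasGradientAt_sub_const_mul_log (hJ ▸ hasGradientAt_const_add_half_inner_sub Hsymm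
      Jstar θs θ) (hh.differentiable (by norm_num) θ) hθS.ne' μ).gradient
  have hgMh : ‖gradient h θ‖ ≤ Mh := hMh.2 ⟨θ, hθ, rfl⟩
  have hMhMJ : Mh * MJ ≤ μ / h θ * m ^ 2 / 8 := by
    have := (le_div_iff₀ (by positivity)).1 (hup.trans (hc₁ ▸ min_le_right _ _))
    rw [show μ / h θ * m ^ 2 / 8 = μ * m ^ 2 / (8 * h θ) by ring, le_div_iff₀ (by positivity)]
    nlinarith
  have hMhε : Mh * (μ * m ^ 2 / (16 * c₁ * Mh)) ≤ μ / h θ * m ^ 2 / 16 := by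
    rw [show μ / h θ * m ^ 2 / 16 = μ * m ^ 2 / (16 * h θ) by ring,
      show Mh * (μ * m ^ 2 / (16 * c₁ * Mh)) = μ * m ^ 2 / (16 * c₁) by field_simp]
    gcongr
  calc k * μ * m ^ 2 / (16 * h θ) = k * (μ / h θ * m ^ 2 / 16) := by ring
    _ ≤ ⟪gradient h θ, -k • averagedGradient T sd md (Jhat μ) θ a⟫ :=
      le_inner_neg_smul_of_norm_sub_le hk.le (by positivity) hm0.le (hc₀m θ hθ.1 hθ.2)
        ((mul_le_mul hgMh (hMJ.2 ⟨θ, hθ, rfl⟩) (norm_nonneg _) hMh0.le).trans hMhMJ)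
        (hgrad ▸ (mul_le_mul hgMh (happrox a ha θ ⟨hlow, hup⟩) (norm_nonneg _) hMh0.le).trans
          hMhε)

theorem averaged_system_repulsion_in_band
    {n : ℕ} (hn : 1 ≤ n)
    (Jstar : ℝ) (θs : EuclideanSpace ℝ (Fin n))
    (H : EuclideanSpace ℝ (Fin n) →L[ℝ] EuclideanSpace ℝ (Fin n))
    (Hsymm : ∀ x y : EuclideanSpace ℝ (Fin n), ⟪H x, y⟫ = ⟪x, H y⟫)
    (Hpos : ∀ x : EuclideanSpace ℝ (Fin n), x ≠ 0 → 0 < ⟪x, H x⟫)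
    (J : EuclideanSpace ℝ (Fin n) → ℝ)
    (hJdef : ∀ θ, J θ = Jstar + (1 / 2) * ⟪θ - θs, H (θ - θs)⟫)
    (h : EuclideanSpace ℝ (Fin n) → ℝ) (hh : ContDiff ℝ 2 h)
    (S : Set (EuclideanSpace ℝ (Fin n))) (hSdef : S = {θ | 0 < h θ})
    (hSne : S.Nonempty)
    (hbdry : IsCompact (frontier S))
    (hgradne : ∀ θ ∈ frontier S, gradient h θ ≠ 0)
    (hsub : ∀ c : ℝ, IsCompact {θ | h θ ≤ c})
    (Jhat : ℝ → EuclideanSpace ℝ (Fin n) → ℝ)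
    (hJhatdef : ∀ μ θ, Jhat μ θ = J θ - μ * Real.log (h θ))
    (r : Fin n → ℝ) (hr : ∀ i, 0 < r i)
    (ω' : Fin n → ℚ) (hω'pos : ∀ i, 0 < ω' i)
    (hω'dist : ∀ i j : Fin n, i ≠ j → ω' i ≠ ω' j)
    (hω'sum : ∀ i j k : Fin n, i ≠ j → j ≠ k → i ≠ k → ω' i + ω' j ≠ ω' k)
    (T : ℝ) (hT : 0 < T)
    (hper : ∀ i, ∃ z : ℤ, (ω' i : ℝ) * T = 2 * Real.pi * z)
    (sd : ℝ → EuclideanSpace ℝ (Fin n))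
    (hsd : ∀ τ i, sd τ i = r i * Real.sin ((ω' i : ℝ) * τ))
    (md : ℝ → ℝ → EuclideanSpace ℝ (Fin n))
    (hmd : ∀ a τ i, md a τ i = (2 / (a * r i)) * Real.sin ((ω' i : ℝ) * τ))
    (k μ : ℝ) (hk : 0 < k) (hμ : 0 < μ)
    (m : ℝ) (hm : IsLeast ((fun θ => ‖gradient h θ‖) '' frontier S) m)
    (c₀ : ℝ) (hc₀ : 0 < c₀)
    (hc₀m : ∀ θ ∈ closure S, h θ ≤ c₀ → m / 2 ≤ ‖gradient h θ‖)
    (Mh MJ : ℝ)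
    (hMh : IsGreatest ((fun θ => ‖gradient h θ‖) '' {θ ∈ closure S | h θ ≤ c₀}) Mh)
    (hMJ : IsGreatest ((fun θ => ‖H (θ - θs)‖) '' {θ ∈ closure S | h θ ≤ c₀}) MJ)
    (hMh0 : 0 < Mh) (hMJ0 : 0 < MJ)
    (c₁ : ℝ) (hc₁ : c₁ = min c₀ (μ * m ^ 2 / (8 * MJ * Mh)))
    :
    ∃ a₁ > 0, ∀ a ∈ Set.Ioo 0 a₁, ∀ θ ∈ S,
      c₁ / 4 ≤ h θ → h θ ≤ c₁ → (∀ τ ∈ Set.Icc (0:ℝ) T, θ + a • sd τ ∈ S) →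
      k * μ * m ^ 2 / (16 * h θ) ≤
        ⟪gradient h θ,
          -k • ((1 / T) • ∫ τ in (0:ℝ)..T, Jhat μ (θ + a • sd τ) • md a τ)⟫ :=
  averaged_system_repulsion_in_band_general Jstar θs H Hsymm J hJdef h hh S hSdef hgradne hsub Jhat
    hJhatdef r hr ω' hω'pos hω'dist T hT hper sd hsd md hmd k μ hk hμ m hm c₀ hc₀ hc₀m Mh MJ hMh hMJ
    hMh0 hMJ0 c₁ hc₁
end
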